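/- Let n ≥ 1, let M and G be nonnegative n×n real matrices, let D be a nonnegative diagonal n×n real matrix, and for β > 0 set J_β = β M + G − D. Assume that β M + G is irreducible for every β > 0, that every row sum of G − D is strictly negative, and that every row sum of M is strictly positive. Then there exists β* > 0 such that λ_max(J_{β*}) = 0 and λ_max(J_β) < 0 for every β with 0 < β < β*. -/

import Mathlib

/-- `l0` is the dominant (Perron–Frobenius) eigenvalue of the real matrix `J`:
it is a real eigenvalue of `J` and every complex eigenvalue `lam` of `J`
(i.e. root of the characteristic polynomial over `ℂ`) satisfies `lam.re ≤ l0`. -/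
def IsLamMax {n : ℕ} (J : Matrix (Fin n) (Fin n) ℝ) (l0 : ℝ) : Prop :=
  (∃ Z : Fin n → ℝ, Z ≠ 0 ∧ J.mulVec Z = l0 • Z) ∧
  ∀ lam : ℂ, (Polynomial.aeval lam) J.charpoly = 0 → lam.re ≤ l0

/-! The matrices `J_β = β M + G - D` (`β > 0`) are Metzler, and `J_β + c • 1` is irreducible once
`c` dominates the diagonal of `D`. Perron–Frobenius, proved through the Collatz–Wielandt function,
gives `J_β` a positive eigenvector whose eigenvalue `ρ β` is `λ_max(J_β)`, and for every positive
vector `x` the bounds `J x ≤ t • x → ρ ≤ t` and `t • x ≤ J x → t ≤ ρ` hold (the second by pairing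
with the left Perron vector). Comparing `J_β` with `J_β'` on the Perron vector of `J_β'` shows
that `ρ` is continuous on `(0, ∞)`, and strictly increasing because the row sums of `M` are
positive. Testing on the all-ones vector gives `ρ < 0` for small `β` (the row sums of `G - D` are
negative) and `ρ > 0` for large `β`; the intermediate value theorem yields `β*`. -/

open Finset Polynomial

namespace Matrix

variable {ι : Type*}

def IsMetzler (J : Matrix ι ι ℝ) : Prop :=
  Pairwise fun i j => 0 ≤ J i j

theorem IsIrreducible.isMetzler_of_add_smul_one [DecidableEq ι] {J : Matrix ι ι ℝ} {c : ℝ}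
    (h : (J + c • 1).IsIrreducible) : J.IsMetzler := fun i j hij => by
  simpa [one_apply_ne hij] using h.nonneg i j

section Fintype

variable [Fintype ι]

theorem mulVec_pos_of_pos {P : Matrix ι ι ℝ} (hP : ∀ i j, 0 < P i j) {x : ι → ℝ} (hx : 0 < x)
    (i : ι) : 0 < (P *ᵥ x) i := by
  obtain ⟨hx0, j, hj⟩ := Pi.lt_def.1 hx
  exact sum_pos' (fun k _ => mul_nonneg (hP i k).le (hx0 k)) ⟨j, mem_univ j, mul_pos (hP i j) hj⟩

theorem smul_add_mulVec_one_apply (M A : Matrix ι ι ℝ) (β : ℝ) (i : ι) :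
    ((β • M + A) *ᵥ 1) i = β * ∑ j, M i j + ∑ j, A i j := by
  simp [mulVec, dotProduct, sum_add_distrib, mul_sum]

theorem norm_le_of_mulVec_le {B : Matrix ι ι ℝ} (hB : ∀ i j, 0 ≤ B i j) {x : ι → ℝ}
    (hx : ∀ i, 0 < x i) {s : ℝ} (hBx : B *ᵥ x ≤ s • x) {μ : ℂ} {v : ι → ℂ} (hv : v ≠ 0)
    (hμ : B.map (algebraMap ℝ ℂ) *ᵥ v = μ • v) : ‖μ‖ ≤ s := by
  obtain ⟨j, hj⟩ := Function.ne_iff.mp hv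
  have : Nonempty ι := ⟨j⟩
  obtain ⟨i, hi⟩ := Finite.exists_max fun k => ‖v k‖ / x k
  set m := ‖v i‖ / x i
  have hvm (k : ι) : ‖v k‖ ≤ m * x k := (div_le_iff₀ (hx k)).1 (hi k)
  have hvi : 0 < ‖v i‖ := by
    have : 0 < ‖v j‖ / x j := div_pos (norm_pos_iff.2 hj) (hx j)
    exact (div_pos_iff_of_pos_right (hx i)).1 (this.trans_le (hi j))
  refine le_of_mul_le_mul_right ?_ hvi
  calc ‖μ‖ * ‖v i‖ = ‖∑ k, (B i k : ℂ) * v k‖ := by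
        rw [← norm_mul, ← smul_eq_mul, ← Pi.smul_apply, ← hμ, mulVec_eq_sum]
        simp [mul_comm]
    _ ≤ ∑ k, B i k * (m * x k) := by
        refine (norm_sum_le _ _).trans (sum_le_sum fun k _ => ?_)
        rw [norm_mul, Complex.norm_real, Real.norm_of_nonneg (hB i k)]
        exact mul_le_mul_of_nonneg_left (hvm k) (hB i k)
    _ = m * (B *ᵥ x) i := by
        simp only [mulVec, dotProduct, mul_sum]
        exact sum_congr rfl fun k _ => by ring
    _ ≤ m * (s * x i) := mul_le_mul_of_nonneg_left (hBx i) (div_nonneg hvi.le (hx i).le)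
    _ = s * ‖v i‖ := by rw [mul_left_comm, div_mul_cancel₀ _ (hx i).ne']

theorem le_of_smul_le_mulVec_of_transpose_mulVec_eq [Nonempty ι] {J : Matrix ι ι ℝ}
    {x y : ι → ℝ} {t r : ℝ} (hx : ∀ i, 0 < x i) (hy : ∀ i, 0 < y i) (hJy : Jᵀ *ᵥ y = r • y)
    (hJx : t • x ≤ J *ᵥ x) : t ≤ r := by
  have hyx : 0 < y ⬝ᵥ x := sum_pos (fun i _ => mul_pos (hy i) (hx i)) univ_nonempty
  refine le_of_mul_le_mul_right ?_ hyx
  calc t * (y ⬝ᵥ x) = y ⬝ᵥ (t • x) := by rw [dotProduct_smul, smul_eq_mul]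
    _ ≤ y ⬝ᵥ (J *ᵥ x) := dotProduct_le_dotProduct_of_nonneg_left hJx fun i => (hy i).le
    _ = r * (y ⬝ᵥ x) := by
      rw [dotProduct_mulVec, ← mulVec_transpose, hJy, smul_dotProduct, smul_eq_mul]

section CollatzWielandt

variable [Nonempty ι] (B : Matrix ι ι ℝ)

noncomputable def collatzWielandt (z : ι → ℝ) : ℝ :=
  univ.inf' univ_nonempty fun i => (B *ᵥ z) i / z i

variable {B}

theorem le_collatzWielandt_iff {z : ι → ℝ} (hz : ∀ i, 0 < z i) {t : ℝ} :
    t ≤ B.collatzWielandt z ↔ t • z ≤ B *ᵥ z := by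
  simp only [collatzWielandt, le_inf'_iff, mem_univ, true_imp_iff, le_div_iff₀ (hz _), Pi.le_def,
    Pi.smul_apply, smul_eq_mul]

theorem lt_collatzWielandt_iff {z : ι → ℝ} (hz : ∀ i, 0 < z i) {t : ℝ} :
    t < B.collatzWielandt z ↔ ∀ i, t * z i < (B *ᵥ z) i := by
  simp only [collatzWielandt, lt_inf'_iff, mem_univ, true_imp_iff, lt_div_iff₀ (hz _)]

theorem collatzWielandt_smul (z : ι → ℝ) {s : ℝ} (hs : s ≠ 0) :
    B.collatzWielandt (s • z) = B.collatzWielandt z := by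
  simp only [collatzWielandt, mulVec_smul, Pi.smul_apply, smul_eq_mul, mul_div_mul_left _ _ hs]

theorem continuousOn_collatzWielandt :
    ContinuousOn B.collatzWielandt {z | ∀ i, 0 < z i} := by
  refine ContinuousOn.finset_inf'_apply _ fun i _ => ContinuousOn.div ?_ ?_ fun z hz => (hz i).ne'
  · exact ((continuous_apply i).comp
      ((continuous_const (y := B)).matrix_mulVec continuous_id)).continuousOn
  · exact (continuous_apply i).continuousOn

theorem collatzWielandt_lt_mulVec {P : Matrix ι ι ℝ} (hBP : Commute B P) (hP : ∀ i j, 0 < P i j)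
    {z : ι → ℝ} (hz : ∀ i, 0 < z i) (hne : B *ᵥ z ≠ B.collatzWielandt z • z) :
    B.collatzWielandt z < B.collatzWielandt (P *ᵥ z) := by
  set r := B.collatzWielandt z
  have hw : 0 < B *ᵥ z - r • z :=
    lt_of_le_of_ne (sub_nonneg.2 ((le_collatzWielandt_iff hz).1 le_rfl)) (sub_ne_zero.2 hne).symm
  have hz' : 0 < z := Pi.lt_def.2 ⟨fun i => (hz i).le, Classical.arbitrary ι, hz _⟩
  have hBPz : B *ᵥ (P *ᵥ z) = r • (P *ᵥ z) + P *ᵥ (B *ᵥ z - r • z) := by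
    rw [mulVec_mulVec, hBP.eq, ← mulVec_mulVec, mulVec_sub, mulVec_smul, add_sub_cancel]
  refine (lt_collatzWielandt_iff (mulVec_pos_of_pos hP hz')).2 fun i => ?_
  rw [hBPz]
  simpa using mulVec_pos_of_pos hP hw i

end CollatzWielandt

variable [DecidableEq ι]

theorem isRoot_charpoly_iff_exists_mulVec_eq_smul {K : Type*} [Field K] (A : Matrix ι ι K)
    (t : K) : A.charpoly.IsRoot t ↔ ∃ v ≠ 0, A *ᵥ v = t • v := by
  have hscalar (v : ι → K) : scalar ι t *ᵥ v = t • v := by ext; simp [mulVec_diagonal]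
  rw [IsRoot.def, eval_charpoly, ← exists_mulVec_eq_zero_iff]
  simp only [sub_mulVec, hscalar, sub_eq_zero, eq_comm]

theorem aeval_charpoly_eq_zero_iff (J : Matrix ι ι ℝ) (μ : ℂ) :
    aeval μ J.charpoly = 0 ↔ ∃ v ≠ 0, J.map (algebraMap ℝ ℂ) *ᵥ v = μ • v := by
  rw [← isRoot_charpoly_iff_exists_mulVec_eq_smul, charpoly_map, IsRoot.def, eval_map_algebraMap]

theorem aeval_charpoly_eq_zero_of_mulVec_eq_smul {J : Matrix ι ι ℝ} {x : ι → ℝ} {r : ℝ}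
    (hx : x ≠ 0) (h : J *ᵥ x = r • x) : aeval (r : ℂ) J.charpoly = 0 := by
  have : J.charpoly.IsRoot r := (isRoot_charpoly_iff_exists_mulVec_eq_smul J r).2 ⟨x, hx, h⟩
  rw [← Complex.coe_algebraMap, aeval_algebraMap_apply, coe_aeval_eq_eval, this.eq_zero, map_zero]

theorem IsMetzler.re_le_of_mulVec_le {J : Matrix ι ι ℝ} (hJ : J.IsMetzler) {x : ι → ℝ}
    (hx : ∀ i, 0 < x i) {t : ℝ} (hJx : J *ᵥ x ≤ t • x) {μ : ℂ}
    (hμ : aeval μ J.charpoly = 0) : μ.re ≤ t := by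
  obtain ⟨v, hv, hJv⟩ := (aeval_charpoly_eq_zero_iff J μ).1 hμ
  set c := ∑ i, |J i i|
  have hB (i j : ι) : 0 ≤ (J + c • 1) i j := by
    rcases eq_or_ne i j with rfl | hij
    · have : -J i i ≤ c := (neg_le_abs _).trans (single_le_sum (fun k _ => abs_nonneg (J k k))
        (mem_univ i))
      simp only [add_apply, smul_apply, one_apply_eq, smul_eq_mul, mul_one]
      linarith
    · simpa [one_apply_ne hij] using hJ hij
  have hBx : (J + c • 1) *ᵥ x ≤ (t + c) • x := by
    rw [add_mulVec, smul_mulVec, one_mulVec, add_smul]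
    exact add_le_add_left hJx _
  have hBv : (J + c • 1).map (algebraMap ℝ ℂ) *ᵥ v = (μ + c) • v := by
    rw [Matrix.map_add, Matrix.map_smul, Matrix.map_one _ (map_zero _) (map_one _), add_mulVec,
      smul_mulVec, one_mulVec, hJv, add_smul, Complex.coe_smul]
    all_goals simp
  calc μ.re = (μ + c).re - c := by simp
    _ ≤ ‖μ + c‖ - c := by gcongr; exact Complex.re_le_norm _
    _ ≤ t := by linarith [norm_le_of_mulVec_le hB hx hBx hv hBv]

theorem pow_apply_le_pow_apply {A B : Matrix ι ι ℝ} (hA : ∀ i j, 0 ≤ A i j)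
    (hAB : ∀ i j, A i j ≤ B i j) (k : ℕ) (i j : ι) : (A ^ k) i j ≤ (B ^ k) i j := by
  induction k generalizing j with
  | zero => rfl
  | succ k ih =>
    simp only [pow_succ, mul_apply]
    exact sum_le_sum fun l _ =>
      mul_le_mul (ih l) (hAB l j) (hA l j) ((pow_apply_nonneg hA k i l).trans (ih l))

theorem IsIrreducible.mono {A B : Matrix ι ι ℝ} (hA : A.IsIrreducible)
    (hAB : ∀ i j, A i j ≤ B i j) : B.IsIrreducible := by
  rw [isIrreducible_iff_exists_pow_pos fun i j => (hA.nonneg i j).trans (hAB i j)]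
  intro i j
  obtain ⟨k, hk, hpos⟩ := (isIrreducible_iff_exists_pow_pos hA.nonneg).1 hA i j
  exact ⟨k, hk, hpos.trans_le (pow_apply_le_pow_apply hA.nonneg hAB k i j)⟩

theorem IsIrreducible.sub_add_smul_one {B D : Matrix ι ι ℝ} (hB : B.IsIrreducible)
    (hD : D.IsDiag) : (B - D + (∑ i, |D i i|) • 1).IsIrreducible := by
  refine hB.mono fun i j => ?_
  rcases eq_or_ne i j with rfl | hij
  · have : D i i ≤ ∑ k, |D k k| :=
      (le_abs_self _).trans (single_le_sum (fun k _ => abs_nonneg (D k k)) (mem_univ i))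
    simp only [add_apply, sub_apply, smul_apply, one_apply_eq, smul_eq_mul, mul_one]
    linarith
  · simp [one_apply_ne hij, hD hij]

theorem IsIrreducible.exists_pos_commute {B : Matrix ι ι ℝ} (hB : B.IsIrreducible) :
    ∃ P : Matrix ι ι ℝ, Commute B P ∧ ∀ i j, 0 < P i j := by
  choose k _ hk using (isIrreducible_iff_exists_pow_pos hB.nonneg).1 hB
  refine ⟨∑ m ∈ range (univ.sup (fun p : ι × ι => k p.1 p.2) + 1), B ^ m,
    Commute.sum_right _ _ _ fun m _ => (Commute.refl B).pow_right m, fun i j => ?_⟩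
  rw [Matrix.sum_apply]
  refine (hk i j).trans_le (single_le_sum (fun m _ => pow_apply_nonneg hB.nonneg m i j) ?_)
  exact mem_range.2 (Nat.lt_succ_of_le (le_sup (f := fun p : ι × ι => k p.1 p.2) (mem_univ (i, j))))

theorem IsIrreducible.exists_pos_eigenvector [Nonempty ι] {B : Matrix ι ι ℝ}
    (hB : B.IsIrreducible) : ∃ r : ℝ, ∃ x : ι → ℝ, (∀ i, 0 < x i) ∧ B *ᵥ x = r • x := by
  obtain ⟨P, hBP, hP⟩ := hB.exists_pos_commute
  set C := (P *ᵥ ·) '' stdSimplex ℝ ι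
  have hC : C ⊆ {z | ∀ i, 0 < z i} := by
    rintro _ ⟨u, hu, rfl⟩
    obtain ⟨i, -, hi⟩ := exists_lt_of_sum_lt (s := univ) (f := 0) (g := u) (by simp [hu.2])
    exact mulVec_pos_of_pos hP (Pi.lt_def.2 ⟨hu.1, i, hi⟩)
  have hCc : IsCompact C :=
    (isCompact_stdSimplex ℝ ι).image (continuous_const.matrix_mulVec continuous_id)
  have hCne : C.Nonempty := ⟨_, _, single_mem_stdSimplex ℝ (Classical.arbitrary ι), rfl⟩
  obtain ⟨z, hzC, hmax⟩ := hCc.exists_isMaxOn hCne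
    ((continuousOn_collatzWielandt (B := B)).mono hC)
  have hz := hC hzC
  refine ⟨B.collatzWielandt z, z, hz, by_contra fun hne => ?_⟩
  have hs : 0 < ∑ i, z i := sum_pos (fun i _ => hz i) univ_nonempty
  have hsC : (∑ i, z i)⁻¹ • (P *ᵥ z) ∈ C := by
    refine ⟨(∑ i, z i)⁻¹ • z, ⟨fun i => ?_, ?_⟩, mulVec_smul _ _ _⟩
    · exact mul_nonneg (inv_nonneg.2 hs.le) (hz i).le
    · simp only [Pi.smul_apply, smul_eq_mul, ← mul_sum, inv_mul_cancel₀ hs.ne']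
  have hle : B.collatzWielandt ((∑ i, z i)⁻¹ • (P *ᵥ z)) ≤ B.collatzWielandt z := hmax hsC
  rw [collatzWielandt_smul _ (inv_ne_zero hs.ne')] at hle
  exact (collatzWielandt_lt_mulVec hBP hP hz hne).not_ge hle

theorem IsIrreducible.exists_pos_eigenvector_of_add_smul_one [Nonempty ι] {J : Matrix ι ι ℝ}
    {c : ℝ} (h : (J + c • 1).IsIrreducible) :
    ∃ r : ℝ, ∃ x : ι → ℝ, (∀ i, 0 < x i) ∧ J *ᵥ x = r • x := by
  obtain ⟨r, x, hx, hJx⟩ := h.exists_pos_eigenvector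
  refine ⟨r - c, x, hx, ?_⟩
  rw [add_mulVec, smul_mulVec, one_mulVec] at hJx
  rw [sub_smul, ← hJx, add_sub_cancel_right]

end Fintype

end Matrix

open Matrix

section LamMax

variable {n : ℕ} {J : Matrix (Fin n) (Fin n) ℝ} {r : ℝ}

theorem IsLamMax.aeval_charpoly_eq_zero (h : IsLamMax J r) : aeval (r : ℂ) J.charpoly = 0 :=
  let ⟨_, hZ, hJZ⟩ := h.1
  aeval_charpoly_eq_zero_of_mulVec_eq_smul hZ hJZ

theorem IsLamMax.unique {r' : ℝ} (h : IsLamMax J r) (h' : IsLamMax J r') : r = r' := by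
  simpa using le_antisymm (h'.2 _ h.aeval_charpoly_eq_zero) (h.2 _ h'.aeval_charpoly_eq_zero)

theorem isLamMax_of_mulVec_eq_smul [NeZero n] (hJ : J.IsMetzler) {x : Fin n → ℝ}
    (hx : ∀ i, 0 < x i) (hJx : J *ᵥ x = r • x) : IsLamMax J r :=
  ⟨⟨x, fun h => (hx 0).ne' (congrFun h 0), hJx⟩, fun _ hμ => hJ.re_le_of_mulVec_le hx hJx.le hμ⟩

theorem IsLamMax.le_of_mulVec_le (h : IsLamMax J r) (hJ : J.IsMetzler) {x : Fin n → ℝ}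
    (hx : ∀ i, 0 < x i) {t : ℝ} (hJx : J *ᵥ x ≤ t • x) : r ≤ t := by
  simpa using hJ.re_le_of_mulVec_le hx hJx h.aeval_charpoly_eq_zero

theorem IsLamMax.le_of_smul_le_mulVec [NeZero n] (h : IsLamMax J r) {c : ℝ}
    (hirr : (J + c • 1).IsIrreducible) {x : Fin n → ℝ} (hx : ∀ i, 0 < x i) {t : ℝ}
    (hJx : t • x ≤ J *ᵥ x) : t ≤ r := by
  obtain ⟨r', y, hy, hJy⟩ := IsIrreducible.exists_pos_eigenvector_of_add_smul_one (J := Jᵀ) (c := c)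
    (by simpa using hirr.transpose)
  have hr' : r' ≤ r := by
    simpa using h.2 r' (charpoly_transpose J ▸
      aeval_charpoly_eq_zero_of_mulVec_eq_smul (fun h => (hy 0).ne' (congrFun h 0)) hJy)
  exact (le_of_smul_le_mulVec_of_transpose_mulVec_eq hx hy hJy hJx).trans hr'

theorem exists_isLamMax [NeZero n] {c : ℝ} (hirr : (J + c • 1).IsIrreducible) :
    ∃ r, IsLamMax J r :=
  let ⟨r, _, hx, hJx⟩ := hirr.exists_pos_eigenvector_of_add_smul_one
  ⟨r, isLamMax_of_mulVec_eq_smul hirr.isMetzler_of_add_smul_one hx hJx⟩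

theorem IsLamMax.exists_pos_eigenvector [NeZero n] (h : IsLamMax J r) {c : ℝ}
    (hirr : (J + c • 1).IsIrreducible) : ∃ x : Fin n → ℝ, (∀ i, 0 < x i) ∧ J *ᵥ x = r • x := by
  obtain ⟨r', x, hx, hJx⟩ := hirr.exists_pos_eigenvector_of_add_smul_one
  rw [h.unique (isLamMax_of_mulVec_eq_smul hirr.isMetzler_of_add_smul_one hx hJx)]
  exact ⟨x, hx, hJx⟩

theorem IsLamMax.le_sup'_mulVec_one [NeZero n] (h : IsLamMax J r) (hJ : J.IsMetzler) :
    r ≤ univ.sup' univ_nonempty (J *ᵥ 1) :=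
  h.le_of_mulVec_le hJ (x := 1) (fun _ => one_pos) fun i => by
    simpa only [Pi.smul_apply, Pi.one_apply, smul_eq_mul, mul_one] using le_sup' _ (mem_univ i)

theorem IsLamMax.inf'_mulVec_one_le [NeZero n] (h : IsLamMax J r) {c : ℝ}
    (hirr : (J + c • 1).IsIrreducible) : univ.inf' univ_nonempty (J *ᵥ 1) ≤ r :=
  h.le_of_smul_le_mulVec hirr (x := 1) (fun _ => one_pos) fun i => by
    simpa only [Pi.smul_apply, Pi.one_apply, smul_eq_mul, mul_one] using inf'_le _ (mem_univ i)

end LamMax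

section AffineFamily

open Filter Topology

variable {n : ℕ} [NeZero n] {M A : Matrix (Fin n) (Fin n) ℝ} {ρ : ℝ → ℝ}

theorem exists_isLamMax_family
    (hirr : ∀ β : ℝ, 0 < β → ∃ c : ℝ, (β • M + A + c • 1).IsIrreducible) :
    ∃ ρ : ℝ → ℝ, ∀ β : ℝ, 0 < β → IsLamMax (β • M + A) (ρ β) := by
  choose! ρ hρ using fun (β : ℝ) (hβ : 0 < β) => exists_isLamMax (hirr β hβ).choose_spec
  exact ⟨ρ, hρ⟩

theorem exists_pos_eigenvector_family
    (hirr : ∀ β : ℝ, 0 < β → ∃ c : ℝ, (β • M + A + c • 1).IsIrreducible)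
    (hρ : ∀ β : ℝ, 0 < β → IsLamMax (β • M + A) (ρ β)) {β' : ℝ} (hβ' : 0 < β') :
    ∃ x : Fin n → ℝ, (∀ i, 0 < x i) ∧
      ∀ β, (β • M + A) *ᵥ x = ρ β' • x + (β - β') • (M *ᵥ x) := by
  obtain ⟨c, hc⟩ := hirr β' hβ'
  obtain ⟨x, hx, hJx⟩ := (hρ β' hβ').exists_pos_eigenvector hc
  refine ⟨x, hx, fun β => ?_⟩
  rw [← hJx, ← smul_mulVec, ← add_mulVec]
  congr 1
  module

theorem exists_abs_lamMax_sub_le (hM : ∀ i j, 0 ≤ M i j)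
    (hirr : ∀ β : ℝ, 0 < β → ∃ c : ℝ, (β • M + A + c • 1).IsIrreducible)
    (hρ : ∀ β : ℝ, 0 < β → IsLamMax (β • M + A) (ρ β)) {β' : ℝ} (hβ' : 0 < β') :
    ∃ K, ∀ β : ℝ, 0 < β → |ρ β - ρ β'| ≤ K * |β - β'| := by
  obtain ⟨x, hx, hJx⟩ := exists_pos_eigenvector_family hirr hρ hβ'
  set K := ∑ i, (M *ᵥ x) i / x i
  have hMx (i) : 0 ≤ (M *ᵥ x) i := by
    simp only [mulVec, dotProduct]
    exact sum_nonneg fun j _ => mul_nonneg (hM i j) (hx j).le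
  have hK (i) : (M *ᵥ x) i ≤ K * x i := (div_le_iff₀ (hx i)).1 <|
    single_le_sum (fun j _ => div_nonneg (hMx j) (hx j).le) (mem_univ i)
  refine ⟨K, fun β hβ => ?_⟩
  have hdev (i) : |((β • M + A) *ᵥ x) i - ρ β' * x i| ≤ K * |β - β'| * x i := by
    simp only [hJx, Pi.add_apply, Pi.smul_apply, smul_eq_mul, add_sub_cancel_left, abs_mul,
      abs_of_nonneg (hMx i)]
    nlinarith [hK i, abs_nonneg (β - β')]
  obtain ⟨c, hc⟩ := hirr β hβ
  have hle := (hρ β hβ).le_of_mulVec_le hc.isMetzler_of_add_smul_one hx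
    (t := ρ β' + K * |β - β'|) fun i => by
      simp only [Pi.smul_apply, smul_eq_mul]
      linarith [(abs_le.1 (hdev i)).2]
  have hge := (hρ β hβ).le_of_smul_le_mulVec hc hx (t := ρ β' - K * |β - β'|) fun i => by
    simp only [Pi.smul_apply, smul_eq_mul]
    linarith [(abs_le.1 (hdev i)).1]
  exact abs_sub_le_iff.2 ⟨by linarith, by linarith⟩

theorem continuousOn_lamMax_family (hM : ∀ i j, 0 ≤ M i j)
    (hirr : ∀ β : ℝ, 0 < β → ∃ c : ℝ, (β • M + A + c • 1).IsIrreducible)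
    (hρ : ∀ β : ℝ, 0 < β → IsLamMax (β • M + A) (ρ β)) : ContinuousOn ρ (Set.Ioi 0) := by
  intro β' hβ'
  obtain ⟨K, hK⟩ := exists_abs_lamMax_sub_le hM hirr hρ hβ'
  refine (continuousAt_of_locally_lipschitz hβ' K fun β hβ => ?_).continuousWithinAt
  rw [Real.dist_eq] at hβ ⊢
  exact hK β (by linarith [(abs_lt.1 hβ).1])

theorem strictMonoOn_lamMax_family (hM : ∀ i j, 0 ≤ M i j) (hrowM : ∀ i, 0 < ∑ j, M i j)
    (hirr : ∀ β : ℝ, 0 < β → ∃ c : ℝ, (β • M + A + c • 1).IsIrreducible)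
    (hρ : ∀ β : ℝ, 0 < β → IsLamMax (β • M + A) (ρ β)) : StrictMonoOn ρ (Set.Ioi 0) := by
  intro β' hβ' β hβ hlt
  obtain ⟨x, hx, hJx⟩ := exists_pos_eigenvector_family hirr hρ hβ'
  have hMx (i) : 0 < (M *ᵥ x) i := by
    obtain ⟨j, -, hj⟩ :=
      exists_lt_of_sum_lt (s := univ) (f := 0) (g := M i) (by simpa using hrowM i)
    exact sum_pos' (fun k _ => mul_nonneg (hM i k) (hx k).le) ⟨j, mem_univ j, mul_pos hj (hx j)⟩
  set m := univ.inf' univ_nonempty fun i => (M *ᵥ x) i / x i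
  have hm : 0 < m := (lt_inf'_iff _).2 fun i _ => div_pos (hMx i) (hx i)
  have hmx (i) : m * x i ≤ (M *ᵥ x) i := (le_div_iff₀ (hx i)).1 (inf'_le _ (mem_univ i))
  obtain ⟨c, hc⟩ := hirr β hβ
  have hge := (hρ β hβ).le_of_smul_le_mulVec hc hx (t := ρ β' + (β - β') * m) fun i => by
    simp only [hJx, Pi.add_apply, Pi.smul_apply, smul_eq_mul]
    nlinarith [hmx i, sub_pos.2 hlt]
  nlinarith [mul_pos (sub_pos.2 hlt) hm]

theorem exists_lamMax_family_neg (hrowA : ∀ i, ∑ j, A i j < 0)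
    (hirr : ∀ β : ℝ, 0 < β → ∃ c : ℝ, (β • M + A + c • 1).IsIrreducible)
    (hρ : ∀ β : ℝ, 0 < β → IsLamMax (β • M + A) (ρ β)) : ∃ β > 0, ρ β < 0 := by
  have hev : ∀ᶠ β in 𝓝[>] (0 : ℝ), ∀ i, ((β • M + A) *ᵥ 1) i < 0 := by
    refine eventually_all.2 fun i => Tendsto.eventually_lt_const (hrowA i) ?_ |>.filter_mono
      nhdsWithin_le_nhds
    simp_rw [smul_add_mulVec_one_apply]
    have : Continuous fun β : ℝ => β * ∑ j, M i j + ∑ j, A i j := by fun_prop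
    simpa using this.tendsto 0
  obtain ⟨β, hβ, hβ0⟩ := (hev.and self_mem_nhdsWithin).exists
  obtain ⟨c, hc⟩ := hirr β hβ0
  exact ⟨β, hβ0, ((hρ β hβ0).le_sup'_mulVec_one hc.isMetzler_of_add_smul_one).trans_lt
    ((sup'_lt_iff _).2 fun i _ => hβ i)⟩

theorem exists_lamMax_family_pos (hrowM : ∀ i, 0 < ∑ j, M i j)
    (hirr : ∀ β : ℝ, 0 < β → ∃ c : ℝ, (β • M + A + c • 1).IsIrreducible)
    (hρ : ∀ β : ℝ, 0 < β → IsLamMax (β • M + A) (ρ β)) : ∃ β > 0, 0 < ρ β := by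
  have hev : ∀ᶠ β : ℝ in atTop, ∀ i, 0 < ((β • M + A) *ᵥ 1) i := by
    refine eventually_all.2 fun i => ?_
    simp_rw [smul_add_mulVec_one_apply]
    exact ((tendsto_id.atTop_mul_const (hrowM i)).atTop_add
      tendsto_const_nhds).eventually_gt_atTop 0
  obtain ⟨β, hβ, hβ0⟩ := (hev.and (eventually_gt_atTop 0)).exists
  obtain ⟨c, hc⟩ := hirr β hβ0
  exact ⟨β, hβ0, ((lt_inf'_iff _).2 fun i _ => hβ i).trans_le ((hρ β hβ0).inf'_mulVec_one_le hc)⟩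

theorem exists_lamMax_family_eq_zero (hM : ∀ i j, 0 ≤ M i j) (hrowM : ∀ i, 0 < ∑ j, M i j)
    (hrowA : ∀ i, ∑ j, A i j < 0)
    (hirr : ∀ β : ℝ, 0 < β → ∃ c : ℝ, (β • M + A + c • 1).IsIrreducible)
    (hρ : ∀ β : ℝ, 0 < β → IsLamMax (β • M + A) (ρ β)) :
    ∃ βstar > 0, ρ βstar = 0 ∧ ∀ β, 0 < β → β < βstar → ρ β < 0 := by
  obtain ⟨β₀, hβ₀, hneg⟩ := exists_lamMax_family_neg hrowA hirr hρ
  obtain ⟨β₁, hβ₁, hpos⟩ := exists_lamMax_family_pos hrowM hirr hρ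
  have hmono := strictMonoOn_lamMax_family hM hrowM hirr hρ
  have hβ₀₁ : β₀ ≤ β₁ := ((hmono.lt_iff_lt hβ₀ hβ₁).1 (hneg.trans hpos)).le
  obtain ⟨βstar, hβstar, hzero⟩ := intermediate_value_Icc hβ₀₁
    ((continuousOn_lamMax_family hM hirr hρ).mono fun β hβ => hβ₀.trans_le hβ.1) ⟨hneg.le, hpos.le⟩
  have hβstar₀ : 0 < βstar := hβ₀.trans_le hβstar.1
  exact ⟨βstar, hβstar₀, hzero, fun β hβ hlt => hzero ▸ hmono hβ hβstar₀ hlt⟩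

end AffineFamily

theorem stmt_7_general {n : ℕ} (hn : 1 ≤ n)
    (M G D : Matrix (Fin n) (Fin n) ℝ)
    (hMnn : ∀ i j, 0 ≤ M i j) (hGnn : ∀ i j, 0 ≤ G i j)
    (hDdiag : D.IsDiag)
    (hirr : ∀ β : ℝ, 0 < β → ∀ i j, ∃ k : ℕ, 0 < k ∧ 0 < ((β • M + G) ^ k) i j)
    (hrowGD : ∀ i, ∑ j, (G - D) i j < 0)
    (hrowM : ∀ i, 0 < ∑ j, M i j) :
    ∃ βstar : ℝ, 0 < βstar ∧ IsLamMax (βstar • M + G - D) 0 ∧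
      ∀ β : ℝ, 0 < β → β < βstar →
        ∀ l : ℝ, IsLamMax (β • M + G - D) l → l < 0 := by
  have : NeZero n := ⟨by omega⟩
  have hirr' (β : ℝ) (hβ : 0 < β) : ∃ c : ℝ, (β • M + (G - D) + c • 1).IsIrreducible := by
    have hnonneg (i j : Fin n) : 0 ≤ (β • M + G) i j := by
      simpa using add_nonneg (mul_nonneg hβ.le (hMnn i j)) (hGnn i j)
    refine ⟨∑ i, |D i i|, ?_⟩
    simpa only [add_sub_assoc] using
      ((isIrreducible_iff_exists_pow_pos hnonneg).2 (hirr β hβ)).sub_add_smul_one hDdiag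
  obtain ⟨ρ, hρ⟩ := exists_isLamMax_family hirr'
  obtain ⟨βstar, hβstar, hzero, hneg⟩ := exists_lamMax_family_eq_zero hMnn hrowM hrowGD hirr' hρ
  simp only [add_sub_assoc]
  refine ⟨βstar, hβstar, hzero ▸ hρ βstar hβstar, fun β hβ hlt l hl => ?_⟩
  rw [hl.unique (hρ β hβ)]
  exact hneg β hβ hlt

/-- For `J_β = β M + G - D` with `M, G` nonnegative, `D` nonnegative diagonal,
`β M + G` irreducible for every `β > 0`, all row sums of `G - D` strictly negative and
all row sums of `M` strictly positive, there is a threshold `β* > 0` with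
`λ_max(J_{β*}) = 0` and `λ_max(J_β) < 0` for every `0 < β < β*`. -/
theorem stmt_7 {n : ℕ} (hn : 1 ≤ n)
    (M G D : Matrix (Fin n) (Fin n) ℝ)
    (hMnn : ∀ i j, 0 ≤ M i j) (hGnn : ∀ i j, 0 ≤ G i j)
    (hDdiag : D.IsDiag) (hDnn : ∀ i, 0 ≤ D i i)
    (hirr : ∀ β : ℝ, 0 < β → ∀ i j, ∃ k : ℕ, 0 < k ∧ 0 < ((β • M + G) ^ k) i j)
    (hrowGD : ∀ i, ∑ j, (G - D) i j < 0)
    (hrowM : ∀ i, 0 < ∑ j, M i j) :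
    ∃ βstar : ℝ, 0 < βstar ∧ IsLamMax (βstar • M + G - D) 0 ∧
      ∀ β : ℝ, 0 < β → β < βstar →
        ∀ l : ℝ, IsLamMax (β • M + G - D) l → l < 0 :=
  stmt_7_general hn M G D hMnn hGnn hDdiag hirr hrowGD hrowM
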